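/- For the greedy β-transformation T with β = (1+√5)/2 and digit set {0, 3, 4}: T(1) = β, T²(1) = β², T³(1) = β⁻³, T⁴(1) = β⁻², T⁵(1) = β⁻¹, T⁶(1) = 1 (so the orbit of 1 is periodic with period 6); and T(3β−4) = 3−β, T²(3β−4) = 2β−1, T³(3β−4) = β⁻¹, hence T⁴(3β−4) = 1. -/
import Mathlib


open MeasureTheory Set

/-- The golden mean `β = (1+√5)/2`. -/
noncomputable def gb : ℝ := (1 + Real.sqrt 5) / 2

/-- The greedy β-transformation with `β = (1+√5)/2` and deleted digit set
`A = {0, 3, 4}`: `T x = βx` on `[0, 3/β)`, `T x = βx − 3` on `[3/β, 4/β)`,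
and `T x = βx − 4` on `[4/β, 3)`. -/
noncomputable def Tg (x : ℝ) : ℝ :=
  if x < 3 / gb then gb * x
  else if x < 4 / gb then gb * x - 3
  else gb * x - 4

lemma sqrt5_sq : Real.sqrt 5 ^ 2 = 5 := Real.sq_sqrt (by norm_num)

lemma sqrt5_lb : (2.2 : ℝ) < Real.sqrt 5 := by
  nlinarith [sqrt5_sq, Real.sqrt_nonneg 5]

lemma sqrt5_ub : Real.sqrt 5 < 2.3 := by
  nlinarith [sqrt5_sq, Real.sqrt_nonneg 5]

lemma gb_lb : (1.6 : ℝ) < gb := by unfold gb; linarith [sqrt5_lb]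

lemma gb_ub : gb < 1.65 := by unfold gb; linarith [sqrt5_ub]

lemma gb_pos : (0 : ℝ) < gb := by linarith [gb_lb]

lemma gb_sq : gb ^ 2 = gb + 1 := by
  unfold gb; nlinarith [sqrt5_sq]

lemma TgA (x : ℝ) (h : gb * x < 3) : Tg x = gb * x := by
  rw [Tg, if_pos]
  rw [lt_div_iff₀ gb_pos, mul_comm]; exact h

lemma TgB (x : ℝ) (h1 : 3 ≤ gb * x) (h2 : gb * x < 4) : Tg x = gb * x - 3 := by
  rw [Tg, if_neg, if_pos]
  · rw [lt_div_iff₀ gb_pos, mul_comm]; exact h2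
  · rw [not_lt, div_le_iff₀ gb_pos, mul_comm]; exact h1

/-- orbits of `1` and `3β − 4` under the greedy β-transformation
with `β = (1+√5)/2` and digit set `{0, 3, 4}`: the orbit of `1` is periodic
with period 6, and `T⁴(3β−4) = 1`. -/
theorem stmt16 :
    Tg 1 = gb ∧ Tg^[2] 1 = gb ^ 2 ∧ Tg^[3] 1 = (gb ^ 3)⁻¹ ∧
    Tg^[4] 1 = (gb ^ 2)⁻¹ ∧ Tg^[5] 1 = gb⁻¹ ∧ Tg^[6] 1 = 1 ∧
    Tg (3 * gb - 4) = 3 - gb ∧ Tg^[2] (3 * gb - 4) = 2 * gb - 1 ∧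
    Tg^[3] (3 * gb - 4) = gb⁻¹ ∧ Tg^[4] (3 * gb - 4) = 1 := by
  have hlb := gb_lb
  have hub := gb_ub
  have hsq := gb_sq
  have hpos := gb_pos
  have h1 : Tg 1 = gb := by rw [TgA 1 (by nlinarith)]; ring
  have h2 : Tg gb = gb ^ 2 := by rw [TgA gb (by nlinarith)]; ring
  have h3 : Tg (gb ^ 2) = 2 * gb - 3 := by
    rw [Tg, if_neg, if_neg]
    · nlinarith
    · rw [not_lt, div_le_iff₀ gb_pos]; nlinarith
    · rw [not_lt, div_le_iff₀ gb_pos]; nlinarith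
  have hinv : gb⁻¹ = gb - 1 :=
    inv_eq_of_mul_eq_one_right (by nlinarith)
  have hinv2 : (gb ^ 2)⁻¹ = 2 - gb :=
    inv_eq_of_mul_eq_one_right (by nlinarith)
  have hinv3 : (gb ^ 3)⁻¹ = 2 * gb - 3 :=
    inv_eq_of_mul_eq_one_right (by nlinarith)
  have h4 : Tg (2 * gb - 3) = 2 - gb := by
    rw [TgA _ (by nlinarith)]; nlinarith
  have h5 : Tg (2 - gb) = gb - 1 := by
    rw [TgA _ (by nlinarith)]; nlinarith
  have h6 : Tg (gb - 1) = 1 := by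
    rw [TgA _ (by nlinarith)]; nlinarith
  have g1 : Tg (3 * gb - 4) = 3 - gb := by
    rw [TgA _ (by nlinarith)]; nlinarith
  have g2 : Tg (3 - gb) = 2 * gb - 1 := by
    rw [TgA _ (by nlinarith)]; nlinarith
  have g3 : Tg (2 * gb - 1) = gb - 1 := by
    rw [TgB _ (by nlinarith) (by nlinarith)]; nlinarith
  simp only [Function.iterate_succ, Function.iterate_zero, Function.comp_apply, id_eq,
    Function.iterate_one]
  rw [h1, h2, h3, h4, h5, h6, g1, g2, g3, hinv, hinv2, hinv3]
  tauto
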